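/- Let q ≥ 1 and let f : ℂ^{1+q} → [0,∞] be measurable. Writing u(v) = (1, v₁, …, v_q) ∈ ℂ^{1+q} for v ∈ ℂ^q, one has ∫_{ℂ^{1+q}} f(y) dy = ∫_{ℂ^q} ∫_{ℂ} f(e · u(v)) |e|^{2q} de dv, where ℂ^d carries the Lebesgue measure of ℝ^{2d} under the identification ℂ ≅ ℝ². (This is the case K = 1, β = 2 of the paper's Jacobian Lemma 3.) -/

import Mathlib

/-!
Split `y = (e, w) ∈ ℂ × ℂ^q` and, for almost every `e` (namely `e ≠ 0`), substitute `w = e • v`.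
As a real linear map of `ℂ^q`, scalar multiplication by `e` has determinant
`Algebra.norm ℝ (e ^ q) = |e|^{2q}`, which is the Jacobian factor; then swap the two integrals.
-/

open MeasureTheory Module
open scoped ENNReal

theorem Fin.smul_cons_one {M : Type*} [MulOneClass M] {n : ℕ} (a : M) (v : Fin n → M) :
    a • (Fin.cons 1 v : Fin (n + 1) → M) = Fin.cons a (a • v) := by
  ext i
  refine Fin.cases ?_ (fun j => ?_) i <;> simp

theorem lintegral_fin_cons {n : ℕ} {α : Type*} [MeasureSpace α] [SigmaFinite (volume : Measure α)]
    {f : (Fin (n + 1) → α) → ℝ≥0∞} (hf : Measurable f) :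
    ∫⁻ y, f y = ∫⁻ x, ∫⁻ w, f (Fin.cons x w) := by
  rw [← (volume_preserving_piFinSuccAbove (fun _ : Fin (n + 1) => α) 0).symm.lintegral_comp hf,
    Measure.volume_eq_prod, lintegral_prod]
  · simp [MeasurableEquiv.piFinSuccAbove_symm_apply, Fin.insertNthEquiv, Fin.insertNth_zero']
  · exact (hf.comp (MeasurableEquiv.measurable _)).aemeasurable

section ComplexScaling

variable {E : Type*} [NormedAddCommGroup E] [NormedSpace ℂ E] [FiniteDimensional ℂ E]

theorem LinearMap.det_restrictScalars_complex_smul_id (e : ℂ) :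
    ((e • LinearMap.id : E →ₗ[ℂ] E).restrictScalars ℝ).det = ‖e‖ ^ (2 * finrank ℂ E) := by
  rw [LinearMap.det_restrictScalars, LinearMap.det_smul, LinearMap.det_id, mul_one, map_pow,
    Algebra.norm_complex_apply, Complex.normSq_eq_norm_sq, pow_mul]

variable [MeasurableSpace E] [BorelSpace E] (μ : Measure E) [μ.IsAddHaarMeasure]

theorem Measure.map_complex_smul_addHaar {e : ℂ} (he : e ≠ 0) :
    μ.map (e • ·) = ENNReal.ofReal (‖e‖ ^ (2 * finrank ℂ E))⁻¹ • μ := by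
  have hdet := LinearMap.det_restrictScalars_complex_smul_id (E := E) e
  have h := Measure.map_linearMap_addHaar_eq_smul_addHaar μ
    (hdet ▸ pow_ne_zero _ (norm_ne_zero_iff.2 he))
  rwa [hdet, abs_of_nonneg (by positivity)] at h

theorem lintegral_comp_complex_smul_mul_norm_pow {e : ℂ} (he : e ≠ 0) (f : E → ℝ≥0∞) :
    ∫⁻ x, f (e • x) * ENNReal.ofReal (‖e‖ ^ (2 * finrank ℂ E)) ∂μ = ∫⁻ x, f x ∂μ := by
  have hpos : 0 < ‖e‖ ^ (2 * finrank ℂ E) := by positivity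
  rw [lintegral_mul_const' _ _ ENNReal.ofReal_ne_top,
    show ∫⁻ x, f (e • x) ∂μ = ∫⁻ x, f x ∂μ.map (e • ·) from
      (lintegral_map_equiv f (MeasurableEquiv.smul₀ e he)).symm,
    Measure.map_complex_smul_addHaar μ he, lintegral_smul_measure, smul_eq_mul, mul_comm,
    ← mul_assoc, ← ENNReal.ofReal_mul hpos.le, mul_inv_cancel₀ hpos.ne', ENNReal.ofReal_one,
    one_mul]

end ComplexScaling

theorem affine_jacobian_complex_K_one_general (q : ℕ)
    (f : (Fin (q + 1) → ℂ) → ℝ≥0∞) (hf : Measurable f) :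
    ∫⁻ y : Fin (q + 1) → ℂ, f y
      = ∫⁻ v : Fin q → ℂ, ∫⁻ e : ℂ,
          f (e • (Fin.cons 1 v : Fin (q + 1) → ℂ)) * ENNReal.ofReal (‖e‖ ^ (2 * q)) := by
  have h_ne_zero : ∀ᵐ e : ℂ, e ≠ 0 := compl_mem_ae_iff.2 (measure_singleton 0)
  have h_rescale (e : ℂ) (he : e ≠ 0) : ∫⁻ w : Fin q → ℂ, f (Fin.cons e w) =
      ∫⁻ v : Fin q → ℂ, f (e • (Fin.cons 1 v : Fin (q + 1) → ℂ)) *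
        ENNReal.ofReal (‖e‖ ^ (2 * q)) := by
    simpa [Fin.smul_cons_one] using
      (lintegral_comp_complex_smul_mul_norm_pow volume he fun w => f (Fin.cons e w)).symm
  have h_meas : Measurable fun p : ℂ × (Fin q → ℂ) =>
      f (p.1 • (Fin.cons 1 p.2 : Fin (q + 1) → ℂ)) * ENNReal.ofReal (‖p.1‖ ^ (2 * q)) := by
    fun_prop
  rw [lintegral_fin_cons hf, lintegral_congr_ae (h_ne_zero.mono h_rescale)]
  exact lintegral_lintegral_swap h_meas.aemeasurable

/-- The case `K = 1`, `β = 2` of the affine-shape Jacobian lemma: for nonnegative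
measurable `f` on `ℂ^{1+q}` (with Lebesgue measure via `ℂ ≅ ℝ²`), writing
`u(v) = (1, v₁, …, v_q)`,
`∫_{ℂ^{1+q}} f(y) dy = ∫_{ℂ^q} ∫_ℂ f(e · u(v)) |e|^{2q} de dv`. -/
theorem affine_jacobian_complex_K_one (q : ℕ) (hq : 1 ≤ q)
    (f : (Fin (q + 1) → ℂ) → ℝ≥0∞) (hf : Measurable f) :
    ∫⁻ y : Fin (q + 1) → ℂ, f y
      = ∫⁻ v : Fin q → ℂ, ∫⁻ e : ℂ,
          f (e • (Fin.cons 1 v : Fin (q + 1) → ℂ)) * ENNReal.ofReal (‖e‖ ^ (2 * q)) :=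
  affine_jacobian_complex_K_one_general q f hf
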